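/- Let H be a complex Hilbert space, X and A finite nonempty sets, and for each x ∈ X let (E_{x,a})_{a∈A} be a family of positive bounded operators on H with Σ_{a∈A} E_{x,a} = I_H. Then there exist a complex Hilbert space K, a linear isometry V : H → K, and orthogonal projections P_{x,a} on K (x ∈ X, a ∈ A) with Σ_{a∈A} P_{x,a} = I_K for every x ∈ X, such that E_{x,a} = V* P_{x,a} V for all x ∈ X and a ∈ A. In particular, every Bell scenario B_{X,A}, whose vertex set is X × A and whose edges are the sets {x} × A (x ∈ X), is dilating. -/

import Mathlib

noncomputable section

structure HilbertC where
  carrier : Type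
  [normed : NormedAddCommGroup carrier]
  [ips : InnerProductSpace ℂ carrier]
  [complete : CompleteSpace carrier]

attribute [instance] HilbertC.normed HilbertC.ips HilbertC.complete

/-- A positive operator representation of the hypergraph with edge set `E`. -/
def IsPOR {V : Type} [Fintype V] (E : Finset (Finset V)) {H : Type}
    [NormedAddCommGroup H] [InnerProductSpace ℂ H] [CompleteSpace H]
    (A : V → H →L[ℂ] H) : Prop :=
  (∀ x, (A x).IsPositive) ∧ ∀ e ∈ E, ∑ x ∈ e, A x = 1

/-- A projective representation of the hypergraph with edge set `E`. -/
def IsPR {V : Type} [Fintype V] (E : Finset (Finset V)) {H : Type}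
    [NormedAddCommGroup H] [InnerProductSpace ℂ H] [CompleteSpace H]
    (A : V → H →L[ℂ] H) : Prop :=
  (∀ x, IsSelfAdjoint (A x) ∧ IsIdempotentElem (A x)) ∧ ∀ e ∈ E, ∑ x ∈ e, A x = 1

/-- The POR `A` dilates to a projective representation. -/
def DilatesToPR {V : Type} [Fintype V] (E : Finset (Finset V)) {H : Type}
    [NormedAddCommGroup H] [InnerProductSpace ℂ H] [CompleteSpace H]
    (A : V → H →L[ℂ] H) : Prop :=
  ∃ (K : HilbertC) (B : V → K.carrier →L[ℂ] K.carrier) (Vi : H →L[ℂ] K.carrier),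
    IsPR E B ∧ Isometry Vi ∧
    ∀ x, A x = (ContinuousLinearMap.adjoint Vi).comp ((B x).comp Vi)

/-- The hypergraph `(V, E)` is dilating. -/
def Dilating (V : Type) [Fintype V] (E : Finset (Finset V)) : Prop :=
  ∀ (H : HilbertC) (A : V → H.carrier →L[ℂ] H.carrier), IsPOR E A → DilatesToPR E A

/-!
Naimark's dilation `h ↦ (√(E a) h)_a` into `⊕_a H` turns a single POVM `E` into the coordinate
projections. Any other POVM `F` can be carried along an isometry `W` as
`W F_a W† + [a = a₀] (1 - W W†)`: this is again a POVM, it compresses back to `F`, and it is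
projective whenever `F` is. Dilating the measurements one at a time thus makes all of them
projective at once, and the composite of the isometries is the required dilation. A POR of the
Bell scenario is exactly a family of POVMs indexed by `X`.
-/

open ContinuousLinearMap
open scoped InnerProduct InnerProductSpace

structure IsPOVM {A H : Type*} [Fintype A] [NormedAddCommGroup H] [InnerProductSpace ℂ H]
    [CompleteSpace H] (E : A → H →L[ℂ] H) : Prop where
  isPositive : ∀ a, (E a).IsPositive
  sum_eq_one : ∑ a, E a = 1

section Isometry

variable {K K' : Type*} [NormedAddCommGroup K] [InnerProductSpace ℂ K] [CompleteSpace K]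
  [NormedAddCommGroup K'] [InnerProductSpace ℂ K'] [CompleteSpace K']
  {W : K →L[ℂ] K'}

theorem adjoint_apply_apply_eq_self (hW : W† ∘L W = 1) (u : K) : adjoint W (W u) = u := by
  simpa using DFunLike.congr_fun hW u

theorem IsStarProjection.conj_isometry (hW : W† ∘L W = 1) {p : K →L[ℂ] K}
    (hp : IsStarProjection p) : IsStarProjection (W ∘L p ∘L W†) where
  isSelfAdjoint := hp.isSelfAdjoint.conj_adjoint W
  isIdempotentElem := by
    ext u
    simpa [adjoint_apply_apply_eq_self hW] using
      congrArg W (DFunLike.congr_fun hp.isIdempotentElem (adjoint W u))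

theorem isStarProjection_comp_adjoint (hW : W† ∘L W = 1) : IsStarProjection (W ∘L W†) := by
  have h := (IsStarProjection.one _).conj_isometry hW
  rwa [one_def, id_comp] at h

variable {A : Type*} [DecidableEq A]

def transport (W : K →L[ℂ] K') (a₀ : A) (E : A → K →L[ℂ] K) (a : A) : K' →L[ℂ] K' :=
  W ∘L E a ∘L W† + (Pi.single a₀ (1 - W ∘L W†) : A → K' →L[ℂ] K') a

theorem isPOVM_transport [Fintype A] (hW : W† ∘L W = 1) (a₀ : A) {E : A → K →L[ℂ] K}
    (hE : IsPOVM E) :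
    IsPOVM (transport W a₀ E) where
  isPositive a := by
    refine ((hE.isPositive a).conj_adjoint W).add ?_
    rcases eq_or_ne a a₀ with rfl | ha
    · simpa using IsPositive.of_isStarProjection (isStarProjection_comp_adjoint hW).one_sub
    · simp [ha, isPositive_zero]
  sum_eq_one := by
    simp only [transport]
    rw [Finset.sum_add_distrib, Finset.sum_pi_single', if_pos (Finset.mem_univ a₀),
      ← comp_finsetSum, ← finsetSum_comp, hE.sum_eq_one]
    ext u
    simp

theorem adjoint_comp_transport_comp (hW : W† ∘L W = 1) (a₀ : A) (E : A → K →L[ℂ] K)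
    (a : A) :
    W† ∘L transport W a₀ E a ∘L W = E a := by
  ext u
  rcases eq_or_ne a a₀ with rfl | ha
  · simp [transport, adjoint_apply_apply_eq_self hW]
  · simp [transport, adjoint_apply_apply_eq_self hW, ha]

theorem isStarProjection_transport (hW : W† ∘L W = 1) (a₀ : A) {E : A → K →L[ℂ] K}
    {a : A} (hp : IsStarProjection (E a)) : IsStarProjection (transport W a₀ E a) := by
  rcases eq_or_ne a a₀ with rfl | ha
  · have h : transport W a E a = 1 - W ∘L (1 - E a) ∘L W† := by
      ext u
      simp [transport]
      abel
    rw [h]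
    exact (hp.one_sub.conj_isometry hW).one_sub
  · simpa [transport, ha] using hp.conj_isometry hW

end Isometry

section Naimark

open PiLp

variable {A K : Type*} [Fintype A] [DecidableEq A]
  [NormedAddCommGroup K] [InnerProductSpace ℂ K]

def PiLp.singleL (a : A) : K →L[ℂ] PiLp 2 (fun _ : A => K) :=
  (PiLp.continuousLinearEquiv 2 ℂ (fun _ : A => K)).symm.toContinuousLinearMap ∘L
    ContinuousLinearMap.single ℂ (fun _ : A => K) a

theorem PiLp.inner_singleL_left (a : A) (k : K) (f : PiLp 2 (fun _ : A => K)) :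
    ⟪singleL a k, f⟫_ℂ = ⟪k, f a⟫_ℂ := by
  simp [singleL, PiLp.inner_apply, apply_ite (inner ℂ · (f _))]

variable [CompleteSpace K]

theorem PiLp.adjoint_singleL (a : A) : (singleL (K := K) a)† = PiLp.proj 2 (fun _ : A => K) a :=
  ((eq_adjoint_iff _ _).mpr fun f k => by
    rw [proj_apply, ← inner_conj_symm f, inner_singleL_left, inner_conj_symm]).symm

theorem PiLp.adjoint_singleL_comp_singleL (a : A) : (singleL (K := K) a)† ∘L singleL a = 1 :=
  (inner_map_map_iff_adjoint_comp_self _).mp fun k k' => by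
    rw [inner_singleL_left]; simp [singleL]

theorem PiLp.sum_singleL_comp_adjoint :
    ∑ a : A, singleL (K := K) a ∘L (singleL (K := K) a)† = 1 := by
  ext1 f
  refine ext_inner_right ℂ fun g => ?_
  simp only [sum_apply, comp_apply, sum_inner, inner_singleL_left, adjoint_singleL, proj_apply]
  rw [PiLp.inner_apply, one_apply_eq_self]

def naimarkDilation (E : A → K →L[ℂ] K) : K →L[ℂ] PiLp 2 (fun _ : A => K) :=
  (PiLp.continuousLinearEquiv 2 ℂ (fun _ : A => K)).symm.toContinuousLinearMap ∘L
    ContinuousLinearMap.pi fun a => CFC.sqrt (E a)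

theorem adjoint_singleL_comp_naimarkDilation (E : A → K →L[ℂ] K) (a : A) :
    (singleL a)† ∘L naimarkDilation E = CFC.sqrt (E a) := by
  rw [adjoint_singleL]; rfl

theorem naimarkDilation_compress {E : A → K →L[ℂ] K} (hE : ∀ a, (E a).IsPositive) (a : A) :
    (naimarkDilation E)† ∘L (singleL a ∘L (singleL a)†) ∘L naimarkDilation E = E a := by
  have hsqrt : (CFC.sqrt (E a))† ∘L CFC.sqrt (E a) = E a := by
    rw [← star_eq_adjoint, (CFC.sqrt_nonneg (E a)).isSelfAdjoint.star_eq]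
    exact CFC.sqrt_mul_sqrt_self _ ((nonneg_iff_isPositive _).mpr (hE a))
  rw [← hsqrt, ← adjoint_singleL_comp_naimarkDilation, adjoint_comp, adjoint_adjoint]
  simp only [comp_assoc]

theorem adjoint_naimarkDilation_comp_self {E : A → K →L[ℂ] K} (hE : IsPOVM E) :
    (naimarkDilation E)† ∘L naimarkDilation E = 1 := by
  calc (naimarkDilation E)† ∘L naimarkDilation E
      = (naimarkDilation E)† ∘L (∑ a : A, singleL a ∘L (singleL a)†) ∘L
          naimarkDilation E := by
        rw [sum_singleL_comp_adjoint]; rfl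
    _ = ∑ a, E a := by
        rw [finsetSum_comp, comp_finsetSum]
        exact Finset.sum_congr rfl fun a _ => naimarkDilation_compress hE.isPositive a
    _ = 1 := hE.sum_eq_one

theorem PiLp.isPOVM_singleL_comp_adjoint :
    IsPOVM fun a : A => singleL (K := K) a ∘L (singleL (K := K) a)† where
  isPositive a :=
    .of_isStarProjection (isStarProjection_comp_adjoint (adjoint_singleL_comp_singleL a))
  sum_eq_one := sum_singleL_comp_adjoint

end Naimark

section Dilation

variable {X A H : Type} [DecidableEq X] [Fintype A] [DecidableEq A] [Nonempty A]
  [NormedAddCommGroup H] [InnerProductSpace ℂ H] [CompleteSpace H]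

open PiLp in
theorem exists_naimark_step (Q : X → A → H →L[ℂ] H) (hQ : ∀ x, IsPOVM (Q x)) (x₀ : X) :
    ∃ (K : HilbertC) (W : H →L[ℂ] K.carrier) (Q' : X → A → K.carrier →L[ℂ] K.carrier),
      W† ∘L W = 1 ∧ (∀ x, IsPOVM (Q' x)) ∧ (∀ x a, W† ∘L Q' x a ∘L W = Q x a) ∧
      (∀ a, IsStarProjection (Q' x₀ a)) ∧
      ∀ x a, IsStarProjection (Q x a) → IsStarProjection (Q' x a) := by
  obtain ⟨a₀⟩ := ‹Nonempty A›
  set W := naimarkDilation (Q x₀)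
  have hW : W† ∘L W = 1 := adjoint_naimarkDilation_comp_self (hQ x₀)
  have hsingle (a : A) : IsStarProjection (singleL (K := H) a ∘L (singleL a)†) :=
    isStarProjection_comp_adjoint (adjoint_singleL_comp_singleL a)
  refine ⟨⟨PiLp 2 fun _ : A => H⟩, W,
    Function.update (fun x => transport W a₀ (Q x)) x₀ fun a => singleL a ∘L (singleL a)†,
    hW, ?_, ?_, by simpa using hsingle, ?_⟩
  · refine (Function.forall_update_iff _ fun _ Q' => IsPOVM Q').mpr
      ⟨isPOVM_singleL_comp_adjoint, fun x _ => isPOVM_transport hW a₀ (hQ x)⟩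
  · intro x a
    rcases eq_or_ne x x₀ with rfl | hx
    · simpa using naimarkDilation_compress (hQ x).isPositive a
    · simpa [hx] using adjoint_comp_transport_comp hW a₀ (Q x) a
  · intro x a hp
    rcases eq_or_ne x x₀ with rfl | hx
    · simpa using hsingle a
    · simpa [hx] using isStarProjection_transport hW a₀ hp

theorem exists_dilation_isStarProjection_on (E : X → A → H →L[ℂ] H)
    (hE : ∀ x, IsPOVM (E x)) (S : Finset X) :
    ∃ (K : HilbertC) (W : H →L[ℂ] K.carrier) (P : X → A → K.carrier →L[ℂ] K.carrier),
      W† ∘L W = 1 ∧ (∀ x, IsPOVM (P x)) ∧ (∀ x a, W† ∘L P x a ∘L W = E x a) ∧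
      ∀ x ∈ S, ∀ a, IsStarProjection (P x a) := by
  induction S using Finset.induction_on with
  | empty =>
    exact ⟨⟨H⟩, .id ℂ H, E, by simp [adjoint_id, one_def], hE, by simp [adjoint_id],
      by simp⟩
  | insert x₀ S _ ih =>
    obtain ⟨K, W, P, hW, hP, hPE, hPS⟩ := ih
    obtain ⟨K', W', P', hW', hP', hP'P, hP'x₀, hP'S⟩ := exists_naimark_step P hP x₀
    refine ⟨K', W' ∘L W, P', ?_, hP', fun x a => ?_, ?_⟩
    · ext u
      simp [adjoint_comp, adjoint_apply_apply_eq_self hW, adjoint_apply_apply_eq_self hW']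
    · rw [← hPE, ← hP'P, adjoint_comp]
      simp only [comp_assoc]
    · simp only [Finset.mem_insert, forall_eq_or_imp]
      exact ⟨hP'x₀, fun x hx a => hP'S x a (hPS x hx a)⟩

end Dilation

theorem exists_projective_dilation {X A H : Type} [Fintype X] [Fintype A] [DecidableEq A]
    [Nonempty A] [NormedAddCommGroup H] [InnerProductSpace ℂ H] [CompleteSpace H]
    (E : X → A → H →L[ℂ] H) (hE : ∀ x, IsPOVM (E x)) :
    ∃ (K : HilbertC) (W : H →L[ℂ] K.carrier) (P : X → A → K.carrier →L[ℂ] K.carrier),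
      Isometry W ∧ (∀ x a, IsSelfAdjoint (P x a) ∧ IsIdempotentElem (P x a)) ∧
      (∀ x, ∑ a, P x a = 1) ∧ ∀ x a, E x a = W† ∘L P x a ∘L W := by
  classical
  obtain ⟨K, W, P, hW, hP, hPE, hPproj⟩ := exists_dilation_isStarProjection_on E hE .univ
  refine ⟨K, W, P, (isometry_iff_adjoint_comp_self W).mpr hW, fun x a => ?_,
    fun x => (hP x).sum_eq_one, fun x a => (hPE x a).symm⟩
  obtain ⟨hidem, hsa⟩ := hPproj x (Finset.mem_univ x) a
  exact ⟨hsa, hidem⟩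

theorem sum_eq_one_on_bell_edges_iff {X A M : Type*} [Fintype X] [Fintype A] [DecidableEq X]
    [DecidableEq A] [AddCommMonoid M] [One M] (B : X × A → M) :
    (∀ e ∈ Finset.univ.image (fun x : X => {x} ×ˢ (Finset.univ : Finset A)),
        ∑ p ∈ e, B p = 1) ↔ ∀ x, ∑ a, B (x, a) = 1 := by
  simp

theorem dilating_bell (X A : Type) [Fintype X] [Fintype A] [DecidableEq X] [DecidableEq A]
    [Nonempty A] :
    Dilating (X × A) (Finset.univ.image fun x : X => {x} ×ˢ (Finset.univ : Finset A)) := by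
  rintro H B ⟨hBpos, hBsum⟩
  rw [sum_eq_one_on_bell_edges_iff] at hBsum
  obtain ⟨K, W, P, hW, hP, hPsum, hPB⟩ :=
    exists_projective_dilation (fun x a => B (x, a)) fun x => ⟨fun a => hBpos (x, a), hBsum x⟩
  exact ⟨K, fun p => P p.1 p.2, W,
    ⟨fun p => hP p.1 p.2, (sum_eq_one_on_bell_edges_iff _).mpr hPsum⟩, hW,
    fun p => hPB p.1 p.2⟩

theorem stmt9_general (X A : Type) [Fintype X] [Fintype A] [DecidableEq X] [DecidableEq A]
    [Nonempty A]
    (H : Type) [NormedAddCommGroup H] [InnerProductSpace ℂ H] [CompleteSpace H]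
    (Em : X → A → H →L[ℂ] H)
    (hpos : ∀ x a, (Em x a).IsPositive)
    (hsum : ∀ x, ∑ a, Em x a = 1) :
    (∃ (K : HilbertC) (Vi : H →L[ℂ] K.carrier)
        (P : X → A → K.carrier →L[ℂ] K.carrier),
        Isometry Vi ∧
        (∀ x a, IsSelfAdjoint (P x a) ∧ IsIdempotentElem (P x a)) ∧
        (∀ x, ∑ a, P x a = 1) ∧
        (∀ x a, Em x a = (ContinuousLinearMap.adjoint Vi).comp ((P x a).comp Vi))) ∧
    Dilating (X × A) (Finset.univ.image (fun x : X => {x} ×ˢ (Finset.univ : Finset A))) :=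
  ⟨exists_projective_dilation Em fun x => ⟨hpos x, hsum x⟩, dilating_bell X A⟩

theorem stmt9 (X A : Type) [Fintype X] [Fintype A] [DecidableEq X] [DecidableEq A]
    [Nonempty X] [Nonempty A]
    (H : Type) [NormedAddCommGroup H] [InnerProductSpace ℂ H] [CompleteSpace H]
    (Em : X → A → H →L[ℂ] H)
    (hpos : ∀ x a, (Em x a).IsPositive)
    (hsum : ∀ x, ∑ a, Em x a = 1) :
    (∃ (K : HilbertC) (Vi : H →L[ℂ] K.carrier)
        (P : X → A → K.carrier →L[ℂ] K.carrier),
        Isometry Vi ∧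
        (∀ x a, IsSelfAdjoint (P x a) ∧ IsIdempotentElem (P x a)) ∧
        (∀ x, ∑ a, P x a = 1) ∧
        (∀ x a, Em x a = (ContinuousLinearMap.adjoint Vi).comp ((P x a).comp Vi))) ∧
    Dilating (X × A) (Finset.univ.image (fun x : X => {x} ×ˢ (Finset.univ : Finset A))) :=
  stmt9_general X A H Em hpos hsum
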